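/- arXiv:2009.10274 — 5 statements merged into one kernel-verified Lean document; each statement's English description precedes it below -/
import Mathlib

section
/- For positive definite matrices A, B and t ∈ [0,1], A ♮_t B = B ♮_{1-t} A. -/
open scoped Matrix.Norms.L2Operator ComplexOrder

variable {n : Type*} [Fintype n] [DecidableEq n]

/-- Real power of a (Hermitian) matrix via the continuous functional calculus. -/
noncomputable def mpow (A : Matrix n n ℂ) (t : ℝ) : Matrix n n ℂ :=
  cfc (fun x : ℝ => x ^ t) A

/-- Matrix logarithm via the continuous functional calculus. -/
noncomputable def mlog (A : Matrix n n ℂ) : Matrix n n ℂ :=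
  cfc Real.log A

/-- The geometric mean `A # B = A^{1/2} (A^{-1/2} B A^{-1/2})^{1/2} A^{1/2}`. -/
noncomputable def geo (A B : Matrix n n ℂ) : Matrix n n ℂ :=
  mpow A (1/2) * mpow (mpow A (-(1/2)) * B * mpow A (-(1/2))) (1/2) * mpow A (1/2)

/-- The weighted geometric mean `A #ₜ B = A^{1/2} (A^{-1/2} B A^{-1/2})^t A^{1/2}`. -/
noncomputable def wgeo (t : ℝ) (A B : Matrix n n ℂ) : Matrix n n ℂ :=
  mpow A (1/2) * mpow (mpow A (-(1/2)) * B * mpow A (-(1/2))) t * mpow A (1/2)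

/-- The weighted spectral geometric mean `A ♮ₜ B = (A⁻¹ # B)^t A (A⁻¹ # B)^t`. -/
noncomputable def sgeo (t : ℝ) (A B : Matrix n n ℂ) : Matrix n n ℂ :=
  mpow (geo A⁻¹ B) t * A * mpow (geo A⁻¹ B) t

/-- Semi-metric `d(A,B) = 2 ‖log (A⁻¹ # B)‖` (operator norm). -/
noncomputable def dsm (A B : Matrix n n ℂ) : ℝ :=
  2 * ‖mlog (geo A⁻¹ B)‖

/-- Loewner order: `Loewner A B` means `A ≤ B`, i.e. `B - A` is positive semidefinite. -/
def Loewner (A B : Matrix n n ℂ) : Prop := (B - A).PosSemidef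

/-!
`X = A⁻¹ # B` is the unique positive definite solution of the Riccati equation `X A X = B`
(conjugating by `A^{1/2}` turns it into `(A^{1/2} X A^{1/2})² = A^{1/2} B A^{1/2}`).
Hence `X⁻¹`, which solves `X⁻¹ B X⁻¹ = A`, equals `B⁻¹ # A`, and
`B ♮_{1-t} A = X^{t-1} (X A X) X^{t-1} = X^t A X^t = A ♮_t B`.
-/

open Matrix
open scoped MatrixOrder

lemma Matrix.PosDef.pos_of_mem_spectrum {A : Matrix n n ℂ} (hA : A.PosDef) :
    ∀ x ∈ spectrum ℝ A, 0 < x :=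
  (StarOrderedRing.isStrictlyPositive_iff_spectrum_pos (R := ℝ) A).mp hA.isStrictlyPositive

lemma Matrix.PosDef.mul_mul_self_of_isHermitian {M C : Matrix n n ℂ} (hM : M.PosDef)
    (hC : C.IsHermitian) (hCu : IsUnit C) : (C * M * C).PosDef := by
  simpa only [hC.eq] using hM.mul_mul_conjTranspose_same (vecMul_injective_iff_isUnit.mpr hCu)

section MatrixPower

variable {A : Matrix n n ℂ}

lemma continuousOn_spectrum_real (f : ℝ → ℝ) (A : Matrix n n ℂ) :
    ContinuousOn f (spectrum ℝ A) :=
  Matrix.finite_real_spectrum.continuousOn f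

lemma Matrix.PosDef.mpow (hA : A.PosDef) (t : ℝ) : (mpow A t).PosDef :=
  ((cfc_isStrictlyPositive_iff _ A (continuousOn_spectrum_real _ A)).mpr
    fun x hx => Real.rpow_pos_of_pos (hA.pos_of_mem_spectrum x hx) t).posDef

lemma mpow_mul_mpow (hA : A.PosDef) (s t : ℝ) : mpow A s * mpow A t = mpow A (s + t) := by
  rw [mpow, mpow, ← cfc_mul _ _ A (continuousOn_spectrum_real _ A)
    (continuousOn_spectrum_real _ A)]
  exact cfc_congr fun x hx => (Real.rpow_add (hA.pos_of_mem_spectrum x hx) s t).symm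

lemma mpow_zero (hA : A.PosDef) : mpow A 0 = 1 := by
  rw [mpow, cfc_congr (g := fun _ : ℝ => (1 : ℝ)) fun x _ => Real.rpow_zero x]
  exact cfc_const_one ℝ A hA.isHermitian.isSelfAdjoint

lemma mpow_one (hA : A.PosDef) : mpow A 1 = A := by
  rw [mpow, cfc_congr (g := fun x : ℝ => x) fun x _ => Real.rpow_one x]
  exact cfc_id' ℝ A hA.isHermitian.isSelfAdjoint

lemma mpow_sub_one_mul (hA : A.PosDef) (t : ℝ) : mpow A (t - 1) * A = mpow A t := by
  nth_rw 2 [← mpow_one hA]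
  rw [mpow_mul_mpow hA, sub_add_cancel]

lemma mul_mpow_sub_one (hA : A.PosDef) (t : ℝ) : A * mpow A (t - 1) = mpow A t := by
  nth_rw 1 [← mpow_one hA]
  rw [mpow_mul_mpow hA, add_sub_cancel]

lemma mpow_neg_mul_mpow (hA : A.PosDef) (t : ℝ) : mpow A (-t) * mpow A t = 1 := by
  rw [mpow_mul_mpow hA, neg_add_cancel, mpow_zero hA]

lemma mpow_mul_mpow_neg (hA : A.PosDef) (t : ℝ) : mpow A t * mpow A (-t) = 1 := by
  rw [mpow_mul_mpow hA, add_neg_cancel, mpow_zero hA]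

lemma mpow_half_mul_mpow_half (hA : A.PosDef) : mpow A (1 / 2) * mpow A (1 / 2) = A := by
  rw [mpow_mul_mpow hA, add_halves, mpow_one hA]

lemma mpow_inv (hA : A.PosDef) (t : ℝ) : mpow A⁻¹ t = mpow A (-t) := by
  have hinv : A⁻¹ = cfc (fun x : ℝ => x⁻¹) A := by
    rw [cfc_ringInverse_id (R := ℝ) A hA.isUnit, nonsing_inv_eq_ringInverse]
  rw [mpow, mpow, hinv, ← cfc_comp' _ _ A ((finite_real_spectrum.image _).continuousOn _)
    (continuousOn_spectrum_real _ A)]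
  refine cfc_congr fun x hx => ?_
  rw [Real.inv_rpow (hA.pos_of_mem_spectrum x hx).le,
    ← Real.rpow_neg (hA.pos_of_mem_spectrum x hx).le]

lemma mpow_mul_self_half (hA : A.PosDef) : mpow (A * A) (1 / 2) = A := by
  have hsq : A * A = cfc (fun x : ℝ => x * x) A := by
    rw [cfc_mul _ _ A (continuousOn_spectrum_real _ A) (continuousOn_spectrum_real _ A),
      cfc_id' ℝ A hA.isHermitian.isSelfAdjoint]
  rw [mpow, hsq, ← cfc_comp' _ _ A ((finite_real_spectrum.image _).continuousOn _)
    (continuousOn_spectrum_real _ A)]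
  refine (cfc_congr fun x hx => ?_).trans (cfc_id' ℝ A hA.isHermitian.isSelfAdjoint)
  exact (Real.sqrt_eq_rpow _).symm.trans (Real.sqrt_mul_self (hA.pos_of_mem_spectrum x hx).le)

end MatrixPower

section GeometricMean

variable {A B : Matrix n n ℂ}

lemma geo_inv_eq (hA : A.PosDef) (B : Matrix n n ℂ) :
    geo A⁻¹ B = mpow A (-(1 / 2)) * mpow (mpow A (1 / 2) * B * mpow A (1 / 2)) (1 / 2) *
      mpow A (-(1 / 2)) := by
  rw [geo, mpow_inv hA, mpow_inv hA, neg_neg]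

lemma Matrix.PosDef.geo_inv (hA : A.PosDef) (hB : B.PosDef) : (geo A⁻¹ B).PosDef := by
  have hP := hA.mpow (1 / 2)
  have hQ := hA.mpow (-(1 / 2))
  have hM := hB.mul_mul_self_of_isHermitian hP.isHermitian hP.isUnit
  rw [geo_inv_eq hA]
  exact (hM.mpow _).mul_mul_self_of_isHermitian hQ.isHermitian hQ.isUnit

lemma geo_inv_mul_mul_geo_inv (hA : A.PosDef) (hB : B.PosDef) :
    geo A⁻¹ B * A * geo A⁻¹ B = B := by
  have hM := hB.mul_mul_self_of_isHermitian (hA.mpow (1 / 2)).isHermitian (hA.mpow _).isUnit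
  rw [geo_inv_eq hA]
  set P := mpow A (1 / 2)
  set Q := mpow A (-(1 / 2))
  set S := mpow (P * B * P) (1 / 2)
  have hQP : Q * P = 1 := mpow_neg_mul_mpow hA _
  have hPQ : P * Q = 1 := mpow_mul_mpow_neg hA _
  have hQAQ : Q * A * Q = 1 := by
    rw [← mpow_half_mul_mpow_half hA, ← mul_assoc, hQP, one_mul, hPQ]
  have hSS : S * S = P * B * P := mpow_half_mul_mpow_half hM
  calc Q * S * Q * A * (Q * S * Q)
      = Q * S * (Q * A * Q) * S * Q := by noncomm_ring
    _ = (Q * P) * B * (P * Q) := by rw [hQAQ, mul_one, mul_assoc Q S S, hSS]; noncomm_ring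
    _ = B := by rw [hQP, hPQ, one_mul, mul_one]

lemma geo_inv_eq_of_mul_mul_eq {X : Matrix n n ℂ} (hA : A.PosDef) (hX : X.PosDef)
    (hXAX : X * A * X = B) : geo A⁻¹ B = X := by
  have hPXP := hX.mul_mul_self_of_isHermitian (hA.mpow (1 / 2)).isHermitian (hA.mpow _).isUnit
  rw [geo_inv_eq hA]
  set P := mpow A (1 / 2)
  set Q := mpow A (-(1 / 2))
  have hPP : P * P = A := mpow_half_mul_mpow_half hA
  have hQP : Q * P = 1 := mpow_neg_mul_mpow hA _
  have hPQ : P * Q = 1 := mpow_mul_mpow_neg hA _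
  have hsq : P * B * P = (P * X * P) * (P * X * P) := by
    rw [← hXAX, ← hPP]
    noncomm_ring
  calc Q * mpow (P * B * P) (1 / 2) * Q
      = (Q * P) * X * (P * Q) := by rw [hsq, mpow_mul_self_half hPXP]; noncomm_ring
    _ = X := by rw [hQP, hPQ, one_mul, mul_one]

lemma geo_inv_symm (hA : A.PosDef) (hB : B.PosDef) : geo B⁻¹ A = (geo A⁻¹ B)⁻¹ := by
  set X := geo A⁻¹ B
  have hX : X.PosDef := hA.geo_inv hB
  have hXAX : X * A * X = B := geo_inv_mul_mul_geo_inv hA hB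
  refine geo_inv_eq_of_mul_mul_eq hB hX.inv ?_
  have hdet : IsUnit X.det := hX.isUnit.map detMonoidHom
  rw [← hXAX, ← mul_assoc, ← mul_assoc, nonsing_inv_mul X hdet, one_mul, mul_assoc,
    mul_nonsing_inv X hdet, mul_one]

end GeometricMean

theorem stmt6_general (A B : Matrix n n ℂ) (hA : A.PosDef) (hB : B.PosDef)
    {t : ℝ} :
    sgeo t A B = sgeo (1 - t) B A := by
  have hX := hA.geo_inv hB
  have hXAX := geo_inv_mul_mul_geo_inv hA hB
  rw [sgeo, sgeo, geo_inv_symm hA hB, mpow_inv hX, neg_sub]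
  set X := geo A⁻¹ B
  calc mpow X t * A * mpow X t
      = mpow X (t - 1) * X * A * (X * mpow X (t - 1)) := by
        rw [mpow_sub_one_mul hX, mul_mpow_sub_one hX]
    _ = mpow X (t - 1) * B * mpow X (t - 1) := by rw [← hXAX]; noncomm_ring

/-- `A ♮ₜ B = B ♮_{1-t} A`. -/
theorem stmt6 (A B : Matrix n n ℂ) (hA : A.PosDef) (hB : B.PosDef)
    {t : ℝ} (ht : t ∈ Set.Icc (0:ℝ) 1) :
    sgeo t A B = sgeo (1 - t) B A :=
  stmt6_general A B hA hB
end

section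
/- The map d(A,B) = 2‖log(A^{-1} # B)‖ on pairs of positive definite matrices (with ‖·‖ the operator norm) is a semi-metric: d(A,B) ≥ 0, d(A,B) = 0 if and only if A = B, and d(A,B) = d(B,A). -/
open scoped Matrix.Norms.L2Operator ComplexOrder

variable {n : Type*} [Fintype n] [DecidableEq n]

/-! The geometric mean `a # b` is the unique positive solution `x` of the Riccati equation
`x a⁻¹ x = b`: conjugating by `a^{-1/2}` turns it into `y * y = a^{-1/2} b a^{-1/2}`, whose
positive solution is unique. For `c = A⁻¹ # B` this gives `c A c = B`, so `c = 1` iff `A = B`,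
and `c⁻¹ B c⁻¹ = A` gives `B⁻¹ # A = c⁻¹`. As `log c⁻¹ = -log c`, and `log c = 0` iff `c = 1`,
the distance is symmetric and vanishes exactly on the diagonal.

None of this is specific to matrices: it holds in any unital C⋆-algebra, and on positive definite
matrices `mpow`, `mlog` and `geo` are the C⋆-algebraic `rpow`, `log` and geometric mean. -/

open scoped Ring

namespace CFC

variable {A : Type*} [CStarAlgebra A] [PartialOrder A] [StarOrderedRing A] {a b x : A}

noncomputable def geomMean (a b : A) : A :=
  a ^ (1/2 : ℝ) * (a ^ (-(1/2) : ℝ) * b * a ^ (-(1/2) : ℝ)) ^ (1/2 : ℝ) * a ^ (1/2 : ℝ)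

lemma inverse_eq_rpow_neg_half_mul_rpow_neg_half (ha : IsStrictlyPositive a) :
    a⁻¹ʳ = a ^ (-(1/2) : ℝ) * a ^ (-(1/2) : ℝ) := by
  rw [inverse_eq_rpow_neg_one, ← rpow_add ha.isUnit]
  norm_num

lemma rpow_half_mul_conj_rpow_neg_half_mul_rpow_half (ha : IsStrictlyPositive a) (c : A) :
    a ^ (1/2 : ℝ) * (a ^ (-(1/2) : ℝ) * c * a ^ (-(1/2) : ℝ)) * a ^ (1/2 : ℝ) = c := by
  calc a ^ (1/2 : ℝ) * (a ^ (-(1/2) : ℝ) * c * a ^ (-(1/2) : ℝ)) * a ^ (1/2 : ℝ)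
      = (a ^ (1/2 : ℝ) * a ^ (-(1/2) : ℝ)) * c * (a ^ (-(1/2) : ℝ) * a ^ (1/2 : ℝ)) := by
        simp only [mul_assoc]
    _ = c := by rw [rpow_mul_rpow_neg _ ha, rpow_neg_mul_rpow _ ha, one_mul, mul_one]

lemma rpow_half_mul_rpow_half (ha : 0 ≤ a) : a ^ (1/2 : ℝ) * a ^ (1/2 : ℝ) = a := by
  rw [← sqrt_eq_rpow, sqrt_mul_sqrt_self a ha]

lemma geomMean_mul_inverse_mul_geomMean (ha : IsStrictlyPositive a) (hb : 0 ≤ b) :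
    geomMean a b * a⁻¹ʳ * geomMean a b = b := by
  rw [geomMean, inverse_eq_rpow_neg_half_mul_rpow_neg_half ha]
  set s := a ^ (1/2 : ℝ)
  set s' := a ^ (-(1/2) : ℝ)
  set r := (s' * b * s') ^ (1/2 : ℝ)
  have hrr : r * r = s' * b * s' := rpow_half_mul_rpow_half <|
    IsSelfAdjoint.conjugate_nonneg hb (IsSelfAdjoint.of_nonneg rpow_nonneg)
  calc s * r * s * (s' * s') * (s * r * s)
      = s * r * (s * s') * (s' * s) * r * s := by simp only [mul_assoc]
    _ = s * (s' * b * s') * s := by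
        rw [rpow_mul_rpow_neg _ ha, rpow_neg_mul_rpow _ ha, mul_one, mul_one, mul_assoc s, hrr]
    _ = b := rpow_half_mul_conj_rpow_neg_half_mul_rpow_half ha b

lemma eq_geomMean_of_mul_inverse_mul (ha : IsStrictlyPositive a) (hx : 0 ≤ x)
    (h : x * a⁻¹ʳ * x = b) : x = geomMean a b := by
  rw [inverse_eq_rpow_neg_half_mul_rpow_neg_half ha] at h
  set s' := a ^ (-(1/2) : ℝ)
  have hy : 0 ≤ s' * x * s' :=
    IsSelfAdjoint.conjugate_nonneg hx (IsSelfAdjoint.of_nonneg rpow_nonneg)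
  have hyy : (s' * x * s') * (s' * x * s') = s' * b * s' := by
    rw [← h]
    simp only [mul_assoc]
  have hsqrt : (s' * b * s') ^ (1/2 : ℝ) = s' * x * s' := by
    rw [← sqrt_eq_rpow, sqrt_unique hyy hy]
  rw [geomMean, hsqrt, rpow_half_mul_conj_rpow_neg_half_mul_rpow_half ha]

lemma _root_.IsStrictlyPositive.geomMean (ha : IsStrictlyPositive a) (hb : IsStrictlyPositive b) :
    IsStrictlyPositive (geomMean a b) := by
  unfold CFC.geomMean
  cfc_tac

lemma geomMean_inverse_eq_one_iff (ha : IsStrictlyPositive a) (hb : 0 ≤ b) :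
    geomMean a⁻¹ʳ b = 1 ↔ a = b := by
  have ha' := ha.ringInverse
  constructor
  · intro h
    have := geomMean_mul_inverse_mul_geomMean ha' hb
    rwa [h, one_mul, mul_one, Ring.inverse_inverse ha.isUnit] at this
  · rintro rfl
    refine (eq_geomMean_of_mul_inverse_mul ha' zero_le_one ?_).symm
    rw [one_mul, mul_one, Ring.inverse_inverse ha.isUnit]

lemma inverse_geomMean_inverse (ha : IsStrictlyPositive a) (hb : IsStrictlyPositive b) :
    (geomMean a⁻¹ʳ b)⁻¹ʳ = geomMean b⁻¹ʳ a := by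
  set c := geomMean a⁻¹ʳ b
  have hc : IsStrictlyPositive c := ha.ringInverse.geomMean hb
  have hcac : c * a * c = b := by
    simpa only [Ring.inverse_inverse ha.isUnit] using
      geomMean_mul_inverse_mul_geomMean ha.ringInverse hb.nonneg
  refine eq_geomMean_of_mul_inverse_mul hb.ringInverse hc.ringInverse.nonneg ?_
  rw [Ring.inverse_inverse hb.isUnit, ← hcac]
  calc c⁻¹ʳ * (c * a * c) * c⁻¹ʳ = (c⁻¹ʳ * c) * a * (c * c⁻¹ʳ) := by simp only [mul_assoc]
    _ = a := by rw [Ring.inverse_mul_cancel c hc.isUnit, Ring.mul_inverse_cancel c hc.isUnit,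
                  one_mul, mul_one]

lemma log_eq_zero_iff (ha : IsStrictlyPositive a) : log a = 0 ↔ a = 1 := by
  refine ⟨fun h => ?_, fun h => h ▸ log_one⟩
  rw [← exp_log a, h, NormedSpace.exp_zero]

lemma log_inverse (ha : IsStrictlyPositive a) : log a⁻¹ʳ = -log a := by
  have hspec : ∀ x ∈ spectrum ℝ a, x ≠ 0 := fun x hx => (ha.spectrum_pos hx).ne'
  rw [← cfc_ringInverse_id (R := ℝ) a ha.isUnit, log, log, ← cfc_comp' Real.log _ a, ← cfc_neg]
  exact cfc_congr fun x _ => Real.log_inv x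

end CFC

open scoped MatrixOrder

namespace Matrix

variable {A B : Matrix n n ℂ}

lemma mpow_eq_rpow (hA : A.PosSemidef) (t : ℝ) : mpow A t = A ^ t :=
  (CFC.rpow_eq_cfc_real hA.nonneg).symm

lemma geo_eq_geomMean (hA : A.PosDef) (hB : B.PosSemidef) : geo A B = CFC.geomMean A B := by
  have hC : (A ^ (-(1/2) : ℝ) * B * A ^ (-(1/2) : ℝ)).PosSemidef :=
    nonneg_iff_posSemidef.mp <|
      IsSelfAdjoint.conjugate_nonneg hB.nonneg (IsSelfAdjoint.of_nonneg CFC.rpow_nonneg)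
  simp only [geo, CFC.geomMean, mpow_eq_rpow hA.posSemidef, mpow_eq_rpow hC]

lemma dsm_eq_norm_log_geomMean (hA : A.PosDef) (hB : B.PosDef) :
    dsm A B = 2 * ‖CFC.log (CFC.geomMean A⁻¹ʳ B)‖ := by
  rw [dsm, mlog, geo_eq_geomMean hA.inv hB.posSemidef, nonsing_inv_eq_ringInverse]
  rfl

end Matrix

/-- `d(A,B) = 2‖log(A⁻¹ # B)‖` is a semi-metric on positive
definite matrices. -/
theorem stmt9 (A B : Matrix n n ℂ) (hA : A.PosDef) (hB : B.PosDef) :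
    0 ≤ dsm A B ∧ (dsm A B = 0 ↔ A = B) ∧ dsm A B = dsm B A := by
  have hA' := hA.isStrictlyPositive
  have hB' := hB.isStrictlyPositive
  have hC := hA'.ringInverse.geomMean hB'
  rw [Matrix.dsm_eq_norm_log_geomMean hA hB, Matrix.dsm_eq_norm_log_geomMean hB hA,
    ← CFC.inverse_geomMean_inverse hA' hB', CFC.log_inverse hC, norm_neg, mul_eq_zero,
    norm_eq_zero, CFC.log_eq_zero_iff hC, CFC.geomMean_inverse_eq_one_iff hA' hB'.nonneg]
  exact ⟨by positivity, by norm_num, rfl⟩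
end

section
/- For positive definite matrices A and B, the following are equivalent: (1) A^{-1} ♮ B ≤ I; (2) A ♮ B^{-1} ≥ I; (3) A # B ≤ A; (4) A # B ≥ B; (5) B ≤ A. -/
/-!
Conjugation by `A^{-1/2}` is an order automorphism sending `A ↦ 1`, `B ↦ C := A^{-1/2} B A^{-1/2}`
and `A # B ↦ C^{1/2}`, so (3), (4) and (5) all become `C ≤ 1`, since on the spectrum
`λ^{1/2} ≤ 1 ↔ λ ≤ 1 ↔ λ ≤ λ^{1/2}`. With `G := A # B` one has `A⁻¹ ♮ B = G^{1/2} A⁻¹ G^{1/2}`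
and, because `A⁻¹ # B⁻¹ = G⁻¹`, `A ♮ B⁻¹ = G^{-1/2} A G^{-1/2}`; conjugating by `G^{∓1/2}` and
using that inversion is order reversing turns (1) and (2) into `G ≤ A`. The argument is valid
in any unital C⋆-algebra.
-/

open scoped Matrix.Norms.L2Operator ComplexOrder

variable {n : Type*} [Fintype n] [DecidableEq n]

open scoped MatrixOrder Ring
open CFC

theorem Real.rpow_le_one_iff_of_nonneg {x t : ℝ} (hx : 0 ≤ x) (ht : 0 < t) :
    x ^ t ≤ 1 ↔ x ≤ 1 :=
  ⟨fun h => not_lt.mp fun h1 => (Real.one_lt_rpow h1 ht).not_ge h,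
    fun h => Real.rpow_le_one hx h ht.le⟩

theorem Real.self_le_rpow_iff {x t : ℝ} (hx : 0 ≤ x) (ht : t < 1) :
    x ≤ x ^ t ↔ x ≤ 1 := by
  refine ⟨fun h => not_lt.mp fun h1 => ?_, fun h => Real.self_le_rpow_of_le_one hx h ht.le⟩
  exact (Real.rpow_lt_rpow_of_exponent_lt h1 ht).not_ge (by rwa [Real.rpow_one])

theorem star_left_conjugate_le_conjugate_iff {R : Type*} [Ring R] [PartialOrder R] [StarRing R]
    [StarOrderedRing R] {a b c : R} (hc : IsUnit c) :
    star c * a * c ≤ star c * b * c ↔ a ≤ b := by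
  refine ⟨fun h => ?_, fun h => star_left_conjugate_le_conjugate h c⟩
  have cancel : ∀ x : R, star c⁻¹ʳ * (star c * x * c) * c⁻¹ʳ = x := fun x => by
    rw [← mul_assoc, ← mul_assoc, ← star_mul, Ring.mul_inverse_cancel c hc, star_one, one_mul,
      mul_assoc, Ring.mul_inverse_cancel c hc, mul_one]
  simpa only [cancel] using star_left_conjugate_le_conjugate h c⁻¹ʳ

theorem IsSelfAdjoint.conjugate_le_conjugate_iff {R : Type*} [Ring R] [PartialOrder R]
    [StarRing R] [StarOrderedRing R] {a b c : R} (hc : IsSelfAdjoint c) (hu : IsUnit c) :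
    c * a * c ≤ c * b * c ↔ a ≤ b := by
  simpa only [hc.star_eq] using star_left_conjugate_le_conjugate_iff (a := a) (b := b) hu

namespace CStarAlgebra

variable {A : Type*} [CStarAlgebra A] [PartialOrder A] [StarOrderedRing A] {a b x y : A}

theorem rpow_le_one_iff {t : ℝ} (ht : 0 < t) (ha : 0 ≤ a := by cfc_tac) :
    a ^ t ≤ 1 ↔ a ≤ 1 := by
  rw [rpow_eq_cfc_real ha, cfc_le_one_iff (R := ℝ) (p := IsSelfAdjoint) _ a
    (Real.continuous_rpow_const ht.le).continuousOn, CFC.le_one_iff (R := ℝ) a]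
  exact forall₂_congr fun r hr =>
    Real.rpow_le_one_iff_of_nonneg (spectrum_nonneg_of_nonneg ha hr) ht

theorem self_le_rpow_iff {t : ℝ} (ht₀ : 0 ≤ t) (ht₁ : t < 1)
    (ha : 0 ≤ a := by cfc_tac) : a ≤ a ^ t ↔ a ≤ 1 := by
  nth_rw 1 [rpow_eq_cfc_real ha, ← cfc_id' ℝ a]
  rw [cfc_le_iff (p := IsSelfAdjoint) (fun x : ℝ => x) _ a continuousOn_id
    (Real.continuous_rpow_const ht₀).continuousOn, CFC.le_one_iff (R := ℝ) a]
  exact forall₂_congr fun r hr => Real.self_le_rpow_iff (spectrum_nonneg_of_nonneg ha hr) ht₁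

theorem conjugate_rpow_le_conjugate_rpow_iff (ha : IsStrictlyPositive a) (s : ℝ) :
    a ^ s * x * a ^ s ≤ a ^ s * y * a ^ s ↔ x ≤ y :=
  (ha.rpow a s).isSelfAdjoint.conjugate_le_conjugate_iff (ha.rpow a s).isUnit

theorem conjugate_rpow_rpow (ha : IsStrictlyPositive a) (s t : ℝ) :
    a ^ s * a ^ t * a ^ s = a ^ (2 * s + t) := by
  rw [← rpow_add ha.isUnit, ← rpow_add ha.isUnit]
  ring_nf

theorem conjugate_rpow_le_one_iff (ha : IsStrictlyPositive a) (s : ℝ) :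
    a ^ s * x * a ^ s ≤ 1 ↔ x ≤ a ^ (-(2 * s)) := by
  rw [← conjugate_rpow_le_conjugate_rpow_iff ha s (y := a ^ (-(2 * s))), conjugate_rpow_rpow ha,
    add_neg_cancel, rpow_zero a]

theorem one_le_conjugate_rpow_iff (ha : IsStrictlyPositive a) (s : ℝ) :
    1 ≤ a ^ s * x * a ^ s ↔ a ^ (-(2 * s)) ≤ x := by
  rw [← conjugate_rpow_le_conjugate_rpow_iff ha s (x := a ^ (-(2 * s))), conjugate_rpow_rpow ha,
    add_neg_cancel, rpow_zero a]

theorem le_iff_conjugate_rpow_neg_one_half_le_one (ha : IsStrictlyPositive a) :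
    x ≤ a ↔ a ^ (-(1 / 2) : ℝ) * x * a ^ (-(1 / 2) : ℝ) ≤ 1 := by
  rw [conjugate_rpow_le_one_iff ha]
  norm_num [rpow_one a]

theorem rpow_neg_one_le_rpow_neg_one_iff (ha : IsStrictlyPositive a) (hb : IsStrictlyPositive b) :
    a ^ (-1 : ℝ) ≤ b ^ (-1 : ℝ) ↔ b ≤ a := by
  refine ⟨fun h => ?_, fun h => rpow_neg_one_le_rpow_neg_one h⟩
  have := rpow_neg_one_le_rpow_neg_one h (ha := ha.rpow a _)
  rwa [rpow_rpow a _ _ (by norm_num), rpow_rpow b _ _ (by norm_num), neg_one_mul, neg_neg,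
    rpow_one a, rpow_one b] at this

noncomputable def geomMean (a b : A) : A :=
  a ^ (1 / 2 : ℝ) * (a ^ (-(1 / 2) : ℝ) * b * a ^ (-(1 / 2) : ℝ)) ^ (1 / 2 : ℝ) *
    a ^ (1 / 2 : ℝ)

noncomputable def spectralGeomMean (t : ℝ) (a b : A) : A :=
  geomMean a⁻¹ʳ b ^ t * a * geomMean a⁻¹ʳ b ^ t

theorem geomMean_nonneg (a b : A) : 0 ≤ geomMean a b :=
  conjugate_nonneg_of_nonneg rpow_nonneg rpow_nonneg

theorem isStrictlyPositive_geomMean (ha : IsStrictlyPositive a) (hb : IsStrictlyPositive b) :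
    IsStrictlyPositive (geomMean a b) := by
  unfold geomMean
  cfc_tac

theorem conjugate_rpow_neg_one_half_geomMean (ha : IsStrictlyPositive a) :
    a ^ (-(1 / 2) : ℝ) * geomMean a b * a ^ (-(1 / 2) : ℝ) =
      (a ^ (-(1 / 2) : ℝ) * b * a ^ (-(1 / 2) : ℝ)) ^ (1 / 2 : ℝ) := by
  simp only [geomMean, ← mul_assoc, rpow_neg_mul_rpow _ ha, one_mul]
  rw [mul_assoc, rpow_mul_rpow_neg _ ha, mul_one]

theorem geomMean_le_left_iff (ha : IsStrictlyPositive a) (hb : 0 ≤ b) :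
    geomMean a b ≤ a ↔ b ≤ a := by
  rw [le_iff_conjugate_rpow_neg_one_half_le_one ha, conjugate_rpow_neg_one_half_geomMean ha,
    rpow_le_one_iff (by norm_num) (conjugate_nonneg_of_nonneg hb rpow_nonneg),
    ← le_iff_conjugate_rpow_neg_one_half_le_one ha]

theorem right_le_geomMean_iff (ha : IsStrictlyPositive a) (hb : 0 ≤ b) :
    b ≤ geomMean a b ↔ b ≤ a := by
  rw [← conjugate_rpow_le_conjugate_rpow_iff ha (-(1 / 2)),
    conjugate_rpow_neg_one_half_geomMean ha, self_le_rpow_iff (by norm_num) (by norm_num)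
      (conjugate_nonneg_of_nonneg hb rpow_nonneg), ← le_iff_conjugate_rpow_neg_one_half_le_one ha]

theorem geomMean_ringInverse (ha : IsStrictlyPositive a) (hb : IsStrictlyPositive b) :
    geomMean a⁻¹ʳ b⁻¹ʳ = (geomMean a b)⁻¹ʳ := by
  set c := a ^ (-(1 / 2) : ℝ) * b * a ^ (-(1 / 2) : ℝ) with hc_def
  have hc : IsStrictlyPositive c := by cfc_tac
  have rpow_inv : ∀ s : ℝ, a⁻¹ʳ ^ s = a ^ (-s) := fun s => by
    rw [inverse_eq_rpow_neg_one ha, rpow_rpow a _ _ (by norm_num), neg_one_mul]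
  have inner_inv : a ^ (1 / 2 : ℝ) * b⁻¹ʳ * a ^ (1 / 2 : ℝ) = c⁻¹ʳ := by
    rw [hc_def, Ring.inverse_mul (Or.inr (ha.rpow a _).isUnit),
      Ring.inverse_mul (Or.inr hb.isUnit), inverse_rpow a _ (by norm_num), neg_neg, mul_assoc]
  rw [geomMean, geomMean, rpow_inv, rpow_inv, neg_neg, inner_inv, inverse_eq_rpow_neg_one hc,
    rpow_rpow c _ _ (by norm_num), Ring.inverse_mul (Or.inr (ha.rpow a _).isUnit),
    Ring.inverse_mul (Or.inr ((hc.rpow c _).isUnit)), inverse_rpow a _ (by norm_num),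
    inverse_rpow c _ (by norm_num), mul_assoc]
  norm_num

theorem spectralGeomMean_ringInverse_le_one_iff (ha : IsStrictlyPositive a)
    (hb : IsStrictlyPositive b) :
    spectralGeomMean (1 / 2) a⁻¹ʳ b ≤ 1 ↔ geomMean a b ≤ a := by
  have hg := isStrictlyPositive_geomMean ha hb
  rw [spectralGeomMean, Ring.inverse_inverse ha.isUnit, conjugate_rpow_le_one_iff hg,
    inverse_eq_rpow_neg_one ha, show -(2 * (1 / 2) : ℝ) = -1 by norm_num,
    rpow_neg_one_le_rpow_neg_one_iff ha hg]

theorem one_le_spectralGeomMean_ringInverse_iff (ha : IsStrictlyPositive a)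
    (hb : IsStrictlyPositive b) :
    1 ≤ spectralGeomMean (1 / 2) a b⁻¹ʳ ↔ geomMean a b ≤ a := by
  have hg := isStrictlyPositive_geomMean ha hb
  rw [spectralGeomMean, geomMean_ringInverse ha hb, inverse_eq_rpow_neg_one hg,
    rpow_rpow _ _ _ (by norm_num), one_le_conjugate_rpow_iff hg]
  norm_num [rpow_one _ hg.nonneg]

theorem tfae_geomMean_le_left (ha : IsStrictlyPositive a) (hb : IsStrictlyPositive b) :
    [spectralGeomMean (1 / 2) a⁻¹ʳ b ≤ 1, 1 ≤ spectralGeomMean (1 / 2) a b⁻¹ʳ,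
      geomMean a b ≤ a, b ≤ geomMean a b, b ≤ a].TFAE := by
  tfae_have 1 ↔ 3 := spectralGeomMean_ringInverse_le_one_iff ha hb
  tfae_have 2 ↔ 3 := one_le_spectralGeomMean_ringInverse_iff ha hb
  tfae_have 3 ↔ 5 := geomMean_le_left_iff ha hb.nonneg
  tfae_have 4 ↔ 5 := right_le_geomMean_iff ha hb.nonneg
  tfae_finish

end CStarAlgebra

theorem loewner_iff_le {m : Type*} [Fintype m] {A B : Matrix m m ℂ} :
    Loewner A B ↔ A ≤ B :=
  Iff.rfl

theorem mpow_eq_rpow {A : Matrix n n ℂ} (hA : 0 ≤ A) (t : ℝ) : mpow A t = A ^ t :=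
  (rpow_eq_cfc_real hA).symm

theorem geo_eq_geomMean {A B : Matrix n n ℂ} (hA : 0 ≤ A) (hB : 0 ≤ B) :
    geo A B = CStarAlgebra.geomMean A B := by
  rw [geo, mpow_eq_rpow hA, mpow_eq_rpow hA,
    mpow_eq_rpow (conjugate_nonneg_of_nonneg hB rpow_nonneg), CStarAlgebra.geomMean]

theorem sgeo_eq_spectralGeomMean {A B : Matrix n n ℂ} (hA : 0 ≤ A) (hB : 0 ≤ B) (t : ℝ) :
    sgeo t A B = CStarAlgebra.spectralGeomMean t A B := by
  rw [sgeo, geo_eq_geomMean (Matrix.nonneg_iff_posSemidef.mp hA).inv.nonneg hB,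
    mpow_eq_rpow (CStarAlgebra.geomMean_nonneg A⁻¹ B), Matrix.nonsing_inv_eq_ringInverse]
  rfl

/-- equivalence of five order conditions for positive definite
`A, B`. -/
theorem stmt14 (A B : Matrix n n ℂ) (hA : A.PosDef) (hB : B.PosDef) :
    [Loewner (sgeo (1/2) A⁻¹ B) 1,
     Loewner 1 (sgeo (1/2) A B⁻¹),
     Loewner (geo A B) A,
     Loewner B (geo A B),
     Loewner B A].TFAE := by
  simp only [loewner_iff_le]
  rw [sgeo_eq_spectralGeomMean hA.inv.posSemidef.nonneg hB.posSemidef.nonneg,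
    sgeo_eq_spectralGeomMean hA.posSemidef.nonneg hB.inv.posSemidef.nonneg,
    geo_eq_geomMean hA.posSemidef.nonneg hB.posSemidef.nonneg,
    Matrix.nonsing_inv_eq_ringInverse, Matrix.nonsing_inv_eq_ringInverse]
  exact CStarAlgebra.tfae_geomMean_le_left hA.isStrictlyPositive hB.isStrictlyPositive
end

section
/- Let S be a Hermitian matrix and X a positive definite matrix. If S X S ≤ X in the Loewner order, then S ≤ I. -/
open scoped Matrix.Norms.L2Operator ComplexOrder

variable {n : Type*} [Fintype n] [DecidableEq n]

/-!
If `S v = t • v` with `v ≠ 0`, testing `S X S ≤ X` against `v` gives `t² ⟪v, X v⟫ ≤ ⟪v, X v⟫`,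
and `⟪v, X v⟫ > 0` forces `t² ≤ 1`. Thus the spectrum of `S` lies below `1`, which for a
Hermitian matrix means `S ≤ 1`.
-/

open scoped Matrix MatrixOrder

namespace Matrix

variable {ι 𝕜 : Type*} [Fintype ι] [RCLike 𝕜]

lemma IsHermitian.star_dotProduct_mul_mul_mulVec_of_mulVec_eq_smul {S : Matrix ι ι 𝕜}
    (hS : S.IsHermitian) (X : Matrix ι ι 𝕜) {v : ι → 𝕜} {t : ℝ} (hv : S *ᵥ v = t • v) :
    star v ⬝ᵥ (S * X * S) *ᵥ v = (t : 𝕜) ^ 2 * (star v ⬝ᵥ X *ᵥ v) := by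
  have hvS : star v ᵥ* S = t • star v := by
    rw [← hS.eq, ← star_mulVec, hv, star_smul, star_trivial]
  rw [← mulVec_mulVec, ← mulVec_mulVec, hv, mulVec_smul, mulVec_smul, dotProduct_smul,
    dotProduct_mulVec, hvS, smul_dotProduct, RCLike.real_smul_eq_coe_mul,
    RCLike.real_smul_eq_coe_mul, ← mul_assoc, ← sq]

lemma IsHermitian.sq_le_one_of_mul_mul_le {S X : Matrix ι ι 𝕜} (hS : S.IsHermitian)
    (hX : X.PosDef) (h : S * X * S ≤ X) {v : ι → 𝕜} (hv0 : v ≠ 0) {t : ℝ}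
    (hv : S *ᵥ v = t • v) : t ^ 2 ≤ 1 := by
  have hq := RCLike.pos_iff.mp (hX.dotProduct_mulVec_pos hv0)
  have hdiff := h.dotProduct_mulVec_nonneg v
  rw [sub_mulVec, dotProduct_sub, hS.star_dotProduct_mul_mul_mulVec_of_mulVec_eq_smul X hv,
    ← one_sub_mul, ← RCLike.ofReal_pow, ← RCLike.ofReal_one, ← RCLike.ofReal_sub] at hdiff
  have hre := (RCLike.nonneg_iff.mp hdiff).1
  rw [RCLike.re_ofReal_mul] at hre
  linarith [nonneg_of_mul_nonneg_left hre hq.1]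

lemma IsHermitian.le_one_of_mul_mul_le [DecidableEq ι] {S X : Matrix ι ι 𝕜}
    (hS : S.IsHermitian) (hX : X.PosDef) (h : S * X * S ≤ X) : S ≤ 1 := by
  suffices hspec : ∀ t ∈ spectrum ℝ S, t ≤ 1 by
    simpa using le_algebraMap_of_spectrum_le hspec hS.isSelfAdjoint
  rw [hS.spectrum_real_eq_range_eigenvalues]
  rintro _ ⟨i, rfl⟩
  have hsq := hS.sq_le_one_of_mul_mul_le hX h
    ((WithLp.ofLp_eq_zero 2).ne.2 <| hS.eigenvectorBasis.orthonormal.ne_zero i)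
    (hS.mulVec_eigenvectorBasis i)
  nlinarith

end Matrix

/-- if `S` is Hermitian, `X` positive definite and `S X S ≤ X`,
then `S ≤ I`. -/
theorem stmt15 (S X : Matrix n n ℂ) (hS : S.IsHermitian) (hX : X.PosDef)
    (h : Loewner (S * X * S) X) : Loewner S 1 :=
  hS.le_one_of_mul_mul_le hX h
end

section
/- Let A, B be 2×2 positive definite Hermitian matrices with det A = det B = 1 (operator norm ‖·‖). Then ‖A + B‖ ≤ √(det(A+B) · ‖A‖ · ‖B‖). -/
open scoped Matrix.Norms.L2Operator ComplexOrder

variable {n : Type*} [Fintype n] [DecidableEq n]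

/-!
For a `2 × 2` positive definite `M` with eigenvalues `μ₁ ≤ μ₂` we have `‖M‖ = μ₂` and
`det M = ‖M‖ μ₁`, so `c ≤ M` (Loewner order) iff `c ‖M‖ ≤ det M`. With `det A = det B = 1`
this gives `‖A‖⁻¹ ≤ A` and `‖B‖⁻¹ ≤ B`, hence `‖A‖⁻¹ + ‖B‖⁻¹ ≤ A + B` and
`(‖A‖⁻¹ + ‖B‖⁻¹) ‖A + B‖ ≤ det (A + B)`. Multiplying by `‖A‖ ‖B‖` and using
`‖A + B‖ ≤ ‖A‖ + ‖B‖` yields `‖A + B‖² ≤ det (A + B) ‖A‖ ‖B‖`.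
-/

open scoped MatrixOrder

namespace Matrix

theorem IsHermitian.algebraMap_le_iff_forall_le_eigenvalues {𝕜 : Type*} [RCLike 𝕜]
    {A : Matrix n n 𝕜} (hA : A.IsHermitian) {r : ℝ} :
    algebraMap ℝ (Matrix n n 𝕜) r ≤ A ↔ ∀ i, r ≤ hA.eigenvalues i := by
  rw [algebraMap_le_iff_le_spectrum hA, hA.spectrum_real_eq_range_eigenvalues,
    Set.forall_mem_range]

theorem IsHermitian.eigenvalues_le_norm [Nonempty n] {A : Matrix n n ℂ} (hA : A.IsHermitian)
    (i : n) : hA.eigenvalues i ≤ ‖A‖ :=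
  (le_abs_self _).trans (spectrum.norm_le_norm_of_mem (hA.eigenvalues_mem_spectrum_real i))

theorem PosSemidef.exists_eigenvalues_eq_norm [Nonempty n] {A : Matrix n n ℂ}
    (hA : A.PosSemidef) : ∃ i, hA.1.eigenvalues i = ‖A‖ := by
  have := CStarAlgebra.norm_mem_spectrum_of_nonneg hA.nonneg
  rwa [hA.1.spectrum_real_eq_range_eigenvalues] at this

theorem PosSemidef.re_det_fin_two {A : Matrix (Fin 2) (Fin 2) ℂ} (hA : A.PosSemidef) :
    A.det.re = ‖A‖ * min (hA.1.eigenvalues 0) (hA.1.eigenvalues 1) := by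
  have hle := hA.1.eigenvalues_le_norm
  have hdet : A.det.re = hA.1.eigenvalues 0 * hA.1.eigenvalues 1 := by
    simp [hA.1.det_eq_prod_eigenvalues, Fin.prod_univ_two]
  rcases Fin.exists_fin_two.1 hA.exists_eigenvalues_eq_norm with h | h
  · rw [hdet, min_eq_right (h ▸ hle 1), h]
  · rw [hdet, min_eq_left (h ▸ hle 0), h, mul_comm]

theorem PosDef.norm_pos [Nonempty n] {A : Matrix n n ℂ} (hA : A.PosDef) : 0 < ‖A‖ :=
  (hA.eigenvalues_pos (Classical.arbitrary n)).trans_le (hA.1.eigenvalues_le_norm _)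

theorem PosDef.algebraMap_le_iff_mul_norm_le_re_det {A : Matrix (Fin 2) (Fin 2) ℂ}
    (hA : A.PosDef) {c : ℝ} : algebraMap ℝ _ c ≤ A ↔ c * ‖A‖ ≤ A.det.re := by
  rw [hA.1.algebraMap_le_iff_forall_le_eigenvalues, hA.posSemidef.re_det_fin_two, mul_comm c,
    mul_le_mul_iff_right₀ hA.norm_pos, le_min_iff, Fin.forall_fin_two]

theorem PosDef.algebraMap_inv_norm_le_of_det_eq_one {A : Matrix (Fin 2) (Fin 2) ℂ}
    (hA : A.PosDef) (hdet : A.det = 1) : algebraMap ℝ _ ‖A‖⁻¹ ≤ A := by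
  rw [hA.algebraMap_le_iff_mul_norm_le_re_det, hdet, inv_mul_cancel₀ hA.norm_pos.ne',
    Complex.one_re]

end Matrix

/-- for `2 × 2` positive definite matrices of determinant one,
`‖A + B‖ ≤ √(det(A+B) ‖A‖ ‖B‖)` (operator norm). -/
theorem stmt18 (A B : Matrix (Fin 2) (Fin 2) ℂ) (hA : A.PosDef) (hB : B.PosDef)
    (hdA : A.det = 1) (hdB : B.det = 1) :
    ‖A + B‖ ≤ Real.sqrt (((A + B).det).re * ‖A‖ * ‖B‖) := by
  have hAB : (‖A‖⁻¹ + ‖B‖⁻¹) * ‖A + B‖ ≤ (A + B).det.re := by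
    rw [← (hA.add hB).algebraMap_le_iff_mul_norm_le_re_det, map_add]
    exact add_le_add (hA.algebraMap_inv_norm_le_of_det_eq_one hdA)
      (hB.algebraMap_inv_norm_le_of_det_eq_one hdB)
  have hnA := hA.norm_pos
  have hnB := hB.norm_pos
  apply Real.le_sqrt_of_sq_le
  calc ‖A + B‖ ^ 2 ≤ (‖A‖ + ‖B‖) * ‖A + B‖ := by rw [sq]; gcongr; exact norm_add_le A B
    _ = (‖A‖⁻¹ + ‖B‖⁻¹) * ‖A + B‖ * (‖A‖ * ‖B‖) := by field_simp; ring
    _ ≤ (A + B).det.re * ‖A‖ * ‖B‖ := by rw [mul_assoc _ ‖A‖]; gcongr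
end
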